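/- CALM lemma (abstract form): let Fact be a type and F : Set Fact → Set Fact a program semantics. Suppose input : histories → Set Fact satisfies (i) monotonicity along futures: H1 ⊑ H2 implies input(H1) ⊆ input(H2), and (ii) richness: for all sets of facts I1 ⊆ I2 there exist histories H1 ⊑ H2 with input(H1) = I1 and input(H2) = I2. Define the induced specification by Obs(H) = {F(input(H))} with outcomes ordered by set inclusion ⊆. Then F is monotone with respect to ⊆ if and only if the induced specification is future-monotone. -/
import Mathlib


/-- The four pairwise disjoint classes of events. -/
inductive EvKind : Type
  | input | internal | send | recv
deriving DecidableEq

/-- A Lamport history: a set of events with a strict partial order,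
    satisfying the send/receive matching conditions. -/
structure History (Ev : Type) (kind : Ev → EvKind) where
  carrier : Set Ev
  ord : Ev → Ev → Prop
  ord_mem : ∀ {e e'}, ord e e' → e ∈ carrier ∧ e' ∈ carrier
  irrefl : ∀ e, ¬ ord e e
  trans : ∀ {a b c}, ord a b → ord b c → ord a c
  recv_match : ∀ r ∈ carrier, kind r = EvKind.recv →
      ∃! s, s ∈ carrier ∧ kind s = EvKind.send ∧ ord s r
  send_once : ∀ s ∈ carrier, kind s = EvKind.send →
      ∀ r r', r ∈ carrier → r' ∈ carrier →
        kind r = EvKind.recv → kind r' = EvKind.recv →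
        ord s r → ord s r' → r = r'

variable {Ev : Type} {kind : Ev → EvKind}

/-- `Future H1 H2` (written `H1 ⊑ H2`): `H2` is a future of `H1`. -/
def Future (H1 H2 : History Ev kind) : Prop :=
  H1.carrier ⊆ H2.carrier ∧
  (∀ e e', H1.ord e e' ↔ (H2.ord e e' ∧ e ∈ H1.carrier ∧ e' ∈ H1.carrier)) ∧
  (∀ e ∈ H1.carrier, ∀ e', H2.ord e' e → e' ∈ H1.carrier)

/-- Input projection `In(H)`: restriction of `H` to its input events. -/
def inProj (H : History Ev kind) : History Ev kind where
  carrier := {e | e ∈ H.carrier ∧ kind e = EvKind.input}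
  ord e e' := H.ord e e' ∧ kind e = EvKind.input ∧ kind e' = EvKind.input
  ord_mem := fun h => ⟨⟨(H.ord_mem h.1).1, h.2.1⟩, (H.ord_mem h.1).2, h.2.2⟩
  irrefl := fun e h => H.irrefl e h.1
  trans := fun h1 h2 => ⟨H.trans h1.1 h2.1, h1.2.1, h2.2.2⟩
  recv_match := fun _ hr hk => nomatch hr.2.symm.trans hk
  send_once := fun _ _ _ r _ hr _ hkr _ _ _ => nomatch hr.2.symm.trans hkr

/-- An input history contains only input events. -/
def IsInputHistory (H : History Ev kind) : Prop :=
  ∀ e ∈ H.carrier, kind e = EvKind.input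

/-- Admissible histories: `H ∈ A(H_in)` iff `H_in ⊑ In(H)`. -/
def Adm (Hin H : History Ev kind) : Prop := Future Hin (inProj H)

/-- Future-monotonicity of a specification `(E, Obs, ⪯)`. -/
def FutureMonotone {O : Type} [PartialOrder O] (Obs : History Ev kind → Set O) : Prop :=
  ∀ H1 H2 : History Ev kind, Future H1 H2 → ∀ o ∈ Obs H1, ∃ o' ∈ Obs H2, o ≤ o'

/-- An implementation: realizable histories (within the admissible ones)
    and an outcome-exposure map. -/
structure Impl (Ev : Type) (kind : Ev → EvKind) (O : Type) where
  R : History Ev kind → Set (History Ev kind)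
  Expose : History Ev kind → Set O
  R_adm : ∀ Hin, IsInputHistory Hin → ∀ H ∈ R Hin, Adm Hin H

/-- Correctness: `Expose_I(H) ⊆ Obs(H)` for every history. -/
def Correct {O : Type} (I : Impl Ev kind O) (Obs : History Ev kind → Set O) : Prop :=
  ∀ H, I.Expose H ⊆ Obs H

/-- Specification-relative possibility `Poss_{H_in}(H)`. -/
def Poss {O : Type} (Obs : History Ev kind → Set O) (Hin H : History Ev kind) : Set O :=
  {o | ∃ H', Adm Hin H' ∧ Future H H' ∧ o ∈ Obs H'}

/-- Implementation-relative possibility `Poss^I_{H_in}(H)`. -/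
def PossI {O : Type} (I : Impl Ev kind O) (Hin H : History Ev kind) : Set O :=
  {o | ∃ H', H' ∈ I.R Hin ∧ Future H H' ∧ o ∈ I.Expose H'}

/-- A coordination-free implementation: correct and possibility preserving. -/
def CoordinationFree {O : Type} (I : Impl Ev kind O) (Obs : History Ev kind → Set O) : Prop :=
  Correct I Obs ∧
  ∀ Hin, IsInputHistory Hin → ∀ H ∈ I.R Hin, PossI I Hin H = Poss Obs Hin H

/-- CALM lemma (abstract form). Given a program semantics
`F : Set Fact → Set Fact` and an input map on histories that is monotone along futures and
rich, the specification `Obs(H) = {F(input H)}`, ordered by set inclusion, is future-monotone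
if and only if `F` is monotone with respect to `⊆`. -/
theorem calm_lemma {Ev : Type} {kind : Ev → EvKind} (Fact : Type)
    (F : Set Fact → Set Fact)
    (input : History Ev kind → Set Fact)
    (hmono : ∀ H1 H2 : History Ev kind, Future H1 H2 → input H1 ⊆ input H2)
    (hrich : ∀ I1 I2 : Set Fact, I1 ⊆ I2 →
      ∃ H1 H2 : History Ev kind, Future H1 H2 ∧ input H1 = I1 ∧ input H2 = I2) :
    (∀ I1 I2 : Set Fact, I1 ⊆ I2 → F I1 ⊆ F I2) ↔
      FutureMonotone (fun H : History Ev kind => ({F (input H)} : Set (Set Fact))) := by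
  constructor
  · intro hF H1 H2 hfut o ho
    simp only [Set.mem_singleton_iff] at ho
    subst ho
    exact ⟨F (input H2), rfl, hF _ _ (hmono _ _ hfut)⟩
  · intro hFM I1 I2 hsub
    obtain ⟨H1, H2, hfut, h1, h2⟩ := hrich I1 I2 hsub
    obtain ⟨o', ho', hle⟩ := hFM H1 H2 hfut (F (input H1)) rfl
    simp only [Set.mem_singleton_iff] at ho'
    subst ho'
    rwa [h1, h2] at hle
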